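/- arXiv:2101.11045 — 3 statements merged into one kernel-verified Lean document; each statement's English description precedes it below -/
import Mathlib

section
/- For each fixed δ>0, the Wiener measure μ (the law of the hypoelliptic Brownian motion g) and the measure μ_δ (the law of the approximation g_δ) are mutually singular probability measures on W₀(ℍ). -/
open MeasureTheory ProbabilityTheory Filter Topology Set
open scoped Classical

noncomputable section

/-- The Heisenberg group as a set: `ℝ² × ℝ`. -/
abbrev He : Type := (ℝ × ℝ) × ℝ

/-- The standard symplectic form on `ℝ²`. -/
def symp (v w : ℝ × ℝ) : ℝ := v.1 * w.2 - v.2 * w.1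

/-- Heisenberg group multiplication. -/
def hmul (a b : He) : He := (a.1 + b.1, a.2 + b.2 + (1 / 2) * symp a.1 b.1)

/-- Heisenberg group inverse. -/
def hinv (a : He) : He := (-a.1, -a.2)

/-- The identity of the Heisenberg group. -/
def hId : He := ((0, 0), 0)

/-- The homogeneous norm `|(v,z)| = (‖v‖⁴ + z²)^(1/4)`. -/
def hnorm (g : He) : ℝ := ((g.1.1 ^ 2 + g.1.2 ^ 2) ^ 2 + g.2 ^ 2) ^ ((1 : ℝ) / 4)

/-- Euclidean norm on `ℝ²`. -/
def enorm2 (v : ℝ × ℝ) : ℝ := Real.sqrt (v.1 ^ 2 + v.2 ^ 2)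

/-- The path space `W₀(ℍ)`: continuous curves on `[0,1]` starting at the identity. -/
structure W0H where
  toFun : ℝ → He
  cont : ContinuousOn toFun (Icc 0 1)
  init : toFun 0 = hId

/-- The distance `d_{W₀(ℍ)}(x,y) = sup_{t∈[0,1]} |x(t)⁻¹ y(t)|`. -/
def dW (x y : W0H) : ℝ := ⨆ t : Icc (0 : ℝ) 1, hnorm (hmul (hinv (x.toFun t)) (y.toFun t))

/-- The norm `‖x‖_{W₀(ℍ)} = sup_{t∈[0,1]} |x(t)|`. -/
def wNorm (x : W0H) : ℝ := ⨆ t : Icc (0 : ℝ) 1, hnorm (x.toFun t)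

/-- Closure of a set in the `‖·‖_{W₀(ℍ)}`-topology. -/
def wClosure (S : Set W0H) : Set W0H := {x | ∀ ε > 0, ∃ y ∈ S, dW y x < ε}

/-- Closedness in the `‖·‖_{W₀(ℍ)}`-topology. -/
def IsWClosed (S : Set W0H) : Prop := wClosure S ⊆ S

instance : MeasurableSpace W0H := MeasurableSpace.comap W0H.toFun inferInstance

/-- The support of a measure on `W₀(ℍ)`: the smallest closed set of full measure. -/
def wSupport (μ : Measure W0H) : Set W0H := ⋂₀ {F | IsWClosed F ∧ μ F = 1}

/-- Build a path in `W₀(ℍ)` from a function (junk value if not a continuous path at `e`). -/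
def mkPath (x : ℝ → He) : W0H :=
  if h : ContinuousOn x (Icc 0 1) ∧ x 0 = hId then ⟨x, h.1, h.2⟩
  else ⟨fun _ => hId, continuousOn_const, rfl⟩

/-- `B` is a standard two-dimensional Brownian motion on `[0,1]` under `P`. -/
structure IsBM2 {Ω : Type*} [MeasurableSpace Ω] (P : Measure Ω) (B : ℝ → Ω → ℝ × ℝ) : Prop where
  init : ∀ ω, B 0 ω = 0
  cont : ∀ ω, ContinuousOn (fun t => B t ω) (Icc 0 1)
  meas : ∀ t, Measurable (B t)
  indep : ∀ (n : ℕ) (t : Fin (n + 1) → ℝ), Monotone t →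
    iIndepFun
      (fun i : Fin n => fun ω => B (t i.succ) ω - B (t i.castSucc) ω) P
  law : ∀ s t : ℝ, 0 ≤ s → s ≤ t →
    P.map (fun ω => B t ω - B s ω) =
      (gaussianReal 0 (Real.toNNReal (t - s))).prod (gaussianReal 0 (Real.toNNReal (t - s)))

/-- Riemann sums (left endpoints, uniform partition of `[0,t]`) for the Lévy area. -/
def levyRS {Ω : Type*} (B : ℝ → Ω → ℝ × ℝ) (n : ℕ) (t : ℝ) (ω : Ω) : ℝ :=
  (1 / 2) * ∑ k ∈ Finset.range n,
    symp (B ((k : ℝ) * t / n) ω) (B (((k : ℝ) + 1) * t / n) ω - B ((k : ℝ) * t / n) ω)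

/-- `A` is the Lévy stochastic area `A_t = (1/2)∫₀ᵗ ω(B_s, dB_s)` (Itô integral),
characterized as the continuous process which is the `L²`-limit of Riemann sums. -/
structure IsLevyArea {Ω : Type*} [MeasurableSpace Ω] (P : Measure Ω) (B : ℝ → Ω → ℝ × ℝ)
    (A : ℝ → Ω → ℝ) : Prop where
  init : ∀ ω, A 0 ω = 0
  cont : ∀ ω, ContinuousOn (fun t => A t ω) (Icc 0 1)
  meas : ∀ t, Measurable (A t)
  ito : ∀ t ∈ Icc (0 : ℝ) 1,
    Tendsto (fun n => ∫ ω, (levyRS B n t ω - A t ω) ^ 2 ∂P) atTop (𝓝 0)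

/-- The hypoelliptic Brownian motion `g = (B, A)` as a `W₀(ℍ)`-valued random variable. -/
def gMap {Ω : Type*} (B : ℝ → Ω → ℝ × ℝ) (A : ℝ → Ω → ℝ) (ω : Ω) : W0H :=
  mkPath fun t => (B t ω, A t ω)

/-- The set `H(ℍ)` of finite-energy horizontal curves starting at the identity:
absolutely continuous curves `γ = (𝐱,z)` with square-integrable derivative `c` of `𝐱`
and `z' = (1/2) ω(𝐱,𝐱')` a.e. -/
def HH : Set W0H :=
  {γ | ∃ c : ℝ → ℝ × ℝ, IntegrableOn c (Icc 0 1) ∧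
      IntegrableOn (fun s => (c s).1 ^ 2 + (c s).2 ^ 2) (Icc 0 1) ∧
      (∀ t ∈ Icc (0 : ℝ) 1, (γ.toFun t).1 = ∫ s in (0 : ℝ)..t, c s) ∧
      (∀ t ∈ Icc (0 : ℝ) 1, (γ.toFun t).2 =
        (1 / 2) * ∫ s in (0 : ℝ)..t, symp ((γ.toFun s).1) (c s))}

/-- Piecewise twice continuously differentiable function on `[0,1]`. -/
def PiecewiseC2 (f : ℝ → ℝ × ℝ) : Prop :=
  ContinuousOn f (Icc 0 1) ∧
  ∃ (n : ℕ) (t : Fin (n + 1) → ℝ), StrictMono t ∧ t 0 = 0 ∧ t (Fin.last n) = 1 ∧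
    ∀ i : Fin n, ContDiffOn ℝ 2 f (Icc (t i.castSucc) (t i.succ))

/-- The set `H_p(ℍ)` of piecewise `C²` horizontal curves starting at the identity. -/
def HpH : Set W0H :=
  {γ | PiecewiseC2 (fun t => (γ.toFun t).1) ∧
    ∀ t ∈ Icc (0 : ℝ) 1, (γ.toFun t).2 =
      (1 / 2) * ∫ s in (0 : ℝ)..t,
        symp ((γ.toFun s).1) (deriv (fun u => (γ.toFun u).1) s)}

/-- An interpolation profile: a `C¹` function with `f 0 = 0`, `f 1 = 1`. -/
def InterpFun (f : ℝ → ℝ) : Prop := ContDiff ℝ 1 f ∧ f 0 = 0 ∧ f 1 = 1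

/-- The piecewise interpolation `B_δ` of the Brownian motion `B`. -/
def Bdelta {Ω : Type*} (f₁ f₂ : ℝ → ℝ) (B : ℝ → Ω → ℝ × ℝ) (δ : ℝ) (t : ℝ) (ω : Ω) : ℝ × ℝ :=
  ((B ((⌊t / δ⌋ : ℝ) * δ) ω).1 +
      f₁ ((t - (⌊t / δ⌋ : ℝ) * δ) / δ) *
        ((B ((⌊t / δ⌋ : ℝ) * δ + δ) ω).1 - (B ((⌊t / δ⌋ : ℝ) * δ) ω).1),
   (B ((⌊t / δ⌋ : ℝ) * δ) ω).2 +
      f₂ ((t - (⌊t / δ⌋ : ℝ) * δ) / δ) *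
        ((B ((⌊t / δ⌋ : ℝ) * δ + δ) ω).2 - (B ((⌊t / δ⌋ : ℝ) * δ) ω).2))

/-- The approximate Lévy area `A_δ(t) = (1/2)∫₀ᵗ ω(B_δ(s), B_δ'(s)) ds`. -/
def Adelta {Ω : Type*} (f₁ f₂ : ℝ → ℝ) (B : ℝ → Ω → ℝ × ℝ) (δ : ℝ) (t : ℝ) (ω : Ω) : ℝ :=
  (1 / 2) * ∫ s in (0 : ℝ)..t,
    symp (Bdelta f₁ f₂ B δ s ω) (deriv (fun u => Bdelta f₁ f₂ B δ u ω) s)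

/-- The approximating process `g_δ = (B_δ, A_δ)` as a `W₀(ℍ)`-valued random variable. -/
def gdMap {Ω : Type*} (f₁ f₂ : ℝ → ℝ) (B : ℝ → Ω → ℝ × ℝ) (δ : ℝ) (ω : Ω) : W0H :=
  mkPath fun t => (Bdelta f₁ f₂ B δ t ω, Adelta f₁ f₂ B δ t ω)

/-- Riemann sums for the Wiener integral `∫₀¹ ⟨h(s), dB_s⟩`. -/
def wienerRS {Ω : Type*} (h : ℝ → ℝ × ℝ) (B : ℝ → Ω → ℝ × ℝ) (n : ℕ) (ω : Ω) : ℝ :=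
  ∑ k ∈ Finset.range n,
    ((h ((k : ℝ) / n)).1 * ((B (((k : ℝ) + 1) / n) ω).1 - (B ((k : ℝ) / n) ω).1) +
     (h ((k : ℝ) / n)).2 * ((B (((k : ℝ) + 1) / n) ω).2 - (B ((k : ℝ) / n) ω).2))

/-- `I` is the Wiener integral `∫₀¹ ⟨h(s), dB_s⟩` (as an `L²`-limit of Riemann sums). -/
def IsWienerInt {Ω : Type*} [MeasurableSpace Ω] (P : Measure Ω) (B : ℝ → Ω → ℝ × ℝ)
    (h : ℝ → ℝ × ℝ) (I : Ω → ℝ) : Prop :=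
  Tendsto (fun n => ∫ ω, (wienerRS h B n ω - I ω) ^ 2 ∂P) atTop (𝓝 0)

/-! On the first cell `[0, δ)` the approximation is `B_δ(t) = (f₁(t/δ) B₁(δ), f₂(t/δ) B₂(δ))`,
so every path `x` of `g_δ` satisfies `x₁(δ/2) = f₁(1/2) x₁(δ)`. For the Brownian path,
`B₁(δ/2) - f₁(1/2) B₁(δ)` is a nontrivial linear combination of the independent Gaussian
increments `B₁(δ/2)` and `B₁(δ) - B₁(δ/2)`, hence a nondegenerate Gaussian, and the relation
holds with probability zero. Most of the work is the measurability of `g_δ`, for which `A_δ` is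
rewritten as the integral of an explicit, jointly measurable density: `B_δ` is differentiable
off the grid `δℤ`. -/

open scoped NNReal

section Gaussian

variable {Ω : Type*} [MeasurableSpace Ω] {P : Measure Ω}

lemma measure_linear_comb_eq_of_indepFun_gaussianReal {X Y : Ω → ℝ} {m₁ m₂ : ℝ} {v₁ v₂ : ℝ≥0}
    (hXY : IndepFun X Y P) (hX : HasLaw X (gaussianReal m₁ v₁) P)
    (hY : HasLaw Y (gaussianReal m₂ v₂) P) (hv₁ : v₁ ≠ 0) (hv₂ : v₂ ≠ 0) {a b : ℝ}
    (hab : a ≠ 0 ∨ b ≠ 0) (c : ℝ) :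
    P {ω | a * X ω + b * Y ω = c} = 0 := by
  have hsum := gaussianReal_add_gaussianReal_of_indepFun
    (hXY.comp (measurable_const_mul a) (measurable_const_mul b))
    (gaussianReal_const_mul hX a).map_eq (gaussianReal_const_mul hY b).map_eq
  have hvar : NNReal.mk (a ^ 2) (sq_nonneg a) * v₁ + NNReal.mk (b ^ 2) (sq_nonneg b) * v₂ ≠ 0 := by
    have hsq : ∀ x : ℝ, x ≠ 0 → 0 < NNReal.mk (x ^ 2) (sq_nonneg x) := fun x hx =>
      NNReal.coe_pos.1 (show (0 : ℝ) < x ^ 2 by positivity)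
    rcases hab with h | h
    · exact (add_pos_of_pos_of_nonneg (mul_pos (hsq a h) (pos_iff_ne_zero.2 hv₁)) zero_le).ne'
    · exact (add_pos_of_nonneg_of_pos zero_le (mul_pos (hsq b h) (pos_iff_ne_zero.2 hv₂))).ne'
  have hlaw : HasLaw (fun ω => a * X ω + b * Y ω) (gaussianReal _ _) P :=
    ⟨by have := hX.aemeasurable; have := hY.aemeasurable; fun_prop, hsum⟩
  rw [hlaw.measure_eq (p := fun x => x = c) (measurableSet_singleton c)]
  exact gaussianReal_absolutelyContinuous _ hvar (measure_singleton c)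

end Gaussian

namespace IsBM2

variable {Ω : Type*} [MeasurableSpace Ω] {P : Measure Ω} {B : ℝ → Ω → ℝ × ℝ}

lemma hasLaw_fst_sub (hB : IsBM2 P B) {s t : ℝ} (hs : 0 ≤ s) (hst : s ≤ t) :
    HasLaw (fun ω => (B t ω - B s ω).1) (gaussianReal 0 (t - s).toNNReal) P := by
  have hinc : Measurable fun ω => B t ω - B s ω := (hB.meas t).sub (hB.meas s)
  refine ⟨hinc.fst.aemeasurable, ?_⟩
  rw [show (fun ω => (B t ω - B s ω).1) = Prod.fst ∘ fun ω => B t ω - B s ω from rfl,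
    ← Measure.map_map measurable_fst hinc, hB.law s t hs hst, Measure.map_fst_prod,
    measure_univ, one_smul]

lemma indepFun_sub (hB : IsBM2 P B) {s t r : ℝ} (hst : s ≤ t) (htr : t ≤ r) :
    IndepFun (fun ω => B t ω - B s ω) (fun ω => B r ω - B t ω) P := by
  have hmono : Monotone ![s, t, r] := by
    refine Fin.monotone_iff_le_succ.2 fun i => ?_
    fin_cases i <;> simpa
  exact (hB.indep 2 ![s, t, r] hmono).indepFun (i := 0) (j := 1) (by decide)

lemma measure_fst_eq_mul_fst (hB : IsBM2 P B) {u v : ℝ} (hu : 0 < u) (huv : u < v) (a : ℝ) :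
    P {ω | (B u ω).1 = a * (B v ω).1} = 0 := by
  have hcoeff : 1 - a ≠ 0 ∨ -a ≠ 0 := by
    by_cases ha : a = 0
    · simp [ha]
    · exact Or.inr (neg_ne_zero.2 ha)
  have h := measure_linear_comb_eq_of_indepFun_gaussianReal
    ((hB.indepFun_sub hu.le huv.le).comp measurable_fst measurable_fst)
    (hB.hasLaw_fst_sub le_rfl hu.le) (hB.hasLaw_fst_sub hu.le huv.le)
    (by simpa using hu) (by simpa using huv) hcoeff 0
  convert h using 2
  ext ω
  simp only [mem_ofPred_eq, Function.comp, Prod.fst_sub, hB.init, sub_zero]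
  constructor <;> intro h <;> linarith

end IsBM2

section Interpolation

variable {f β : ℝ → ℝ} {δ t : ℝ}

def interpPiece (f β : ℝ → ℝ) (δ : ℝ) (k : ℤ) (t : ℝ) : ℝ :=
  β (k * δ) + f ((t - k * δ) / δ) * (β (k * δ + δ) - β (k * δ))

def interpPieceDeriv (f β : ℝ → ℝ) (δ : ℝ) (k : ℤ) (t : ℝ) : ℝ :=
  deriv f ((t - k * δ) / δ) * (β (k * δ + δ) - β (k * δ)) / δ

def interp (f β : ℝ → ℝ) (δ t : ℝ) : ℝ := interpPiece f β δ ⌊t / δ⌋ t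

def interpDeriv (f β : ℝ → ℝ) (δ t : ℝ) : ℝ := interpPieceDeriv f β δ ⌊t / δ⌋ t

lemma floor_div_eq_of_mem_Ico (hδ : 0 < δ) {k : ℤ} (ht : t ∈ Ico (k * δ) (k * δ + δ)) :
    ⌊t / δ⌋ = k := by
  rw [Int.floor_eq_iff, le_div_iff₀ hδ, div_lt_iff₀ hδ]
  exact ⟨ht.1, by linarith [ht.2]⟩

lemma mem_Ico_floor_div (hδ : 0 < δ) (t : ℝ) : t ∈ Ico (⌊t / δ⌋ * δ) (⌊t / δ⌋ * δ + δ) := by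
  have h := Int.floor_eq_iff.1 (rfl : ⌊t / δ⌋ = ⌊t / δ⌋)
  rw [le_div_iff₀ hδ, div_lt_iff₀ hδ] at h
  exact ⟨h.1, by linarith [h.2]⟩

lemma interp_eq_interpPiece (hδ : 0 < δ) {k : ℤ} (ht : t ∈ Ico (k * δ) (k * δ + δ)) :
    interp f β δ t = interpPiece f β δ k t := by
  rw [interp, floor_div_eq_of_mem_Ico hδ ht]

lemma interpDeriv_eq_interpPieceDeriv (hδ : 0 < δ) {k : ℤ} (ht : t ∈ Ico (k * δ) (k * δ + δ)) :
    interpDeriv f β δ t = interpPieceDeriv f β δ k t := by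
  rw [interpDeriv, floor_div_eq_of_mem_Ico hδ ht]

lemma interp_eventuallyEq_interpPiece (hδ : 0 < δ) (ht : ∀ k : ℤ, t ≠ k * δ) :
    interp f β δ =ᶠ[𝓝 t] interpPiece f β δ ⌊t / δ⌋ := by
  have hmem := mem_Ico_floor_div hδ t
  have hlt : ⌊t / δ⌋ * δ < t := hmem.1.lt_of_ne (ht _).symm
  filter_upwards [Ioo_mem_nhds hlt hmem.2] with s hs
  exact interp_eq_interpPiece hδ ⟨hs.1.le, hs.2⟩

lemma interpPiece_self (hf0 : f 0 = 0) (k : ℤ) : interpPiece f β δ k (k * δ) = β (k * δ) := by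
  simp [interpPiece, hf0]

lemma interpPiece_sub_one (hδ : δ ≠ 0) (hf1 : f 1 = 1) (k : ℤ) :
    interpPiece f β δ (k - 1) (k * δ) = β (k * δ) := by
  have h1 : ((k : ℝ) * δ - ((k - 1 : ℤ) : ℝ) * δ) / δ = 1 := by
    push_cast; field_simp; ring
  have h2 : ((k - 1 : ℤ) : ℝ) * δ + δ = k * δ := by push_cast; ring
  rw [interpPiece, h1, h2, hf1]
  ring

lemma interp_intCast_mul (hδ : 0 < δ) (hf0 : f 0 = 0) (k : ℤ) :
    interp f β δ (k * δ) = β (k * δ) := by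
  rw [interp_eq_interpPiece hδ ⟨le_rfl, by linarith⟩, interpPiece_self hf0]

lemma interp_of_mem_Ico_zero (hδ : 0 < δ) (ht : t ∈ Ico 0 δ) :
    interp f β δ t = β 0 + f (t / δ) * (β δ - β 0) := by
  rw [interp_eq_interpPiece (k := 0) hδ (by simpa using ht)]
  simp [interpPiece]

lemma continuous_interpPiece (hf : Continuous f) (k : ℤ) : Continuous (interpPiece f β δ k) := by
  unfold interpPiece; fun_prop

lemma continuous_interpPieceDeriv (hf : Continuous (deriv f)) (k : ℤ) :
    Continuous (interpPieceDeriv f β δ k) := by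
  unfold interpPieceDeriv; fun_prop

lemma hasDerivAt_interpPiece (hf : Differentiable ℝ f) (k : ℤ) (t : ℝ) :
    HasDerivAt (interpPiece f β δ k) (interpPieceDeriv f β δ k t) t := by
  have hin : HasDerivAt (fun s => (s - k * δ) / δ) (1 / δ) t := by
    simpa using ((hasDerivAt_id t).sub_const ((k : ℝ) * δ)).div_const δ
  refine ((((hf _).hasDerivAt.comp t hin).mul_const (β (k * δ + δ) - β (k * δ))).const_add
    (β (k * δ))).congr_deriv ?_
  simp only [interpPieceDeriv]
  ring

lemma continuous_interp (hδ : 0 < δ) (hf : Continuous f) (hf0 : f 0 = 0) (hf1 : f 1 = 1) :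
    Continuous (interp f β δ) := by
  refine continuous_iff_continuousAt.2 fun t => ?_
  by_cases hgrid : ∃ k : ℤ, t = k * δ
  · obtain ⟨k, rfl⟩ := hgrid
    refine continuousAt_iff_continuous_left_right.2 ⟨?_, ?_⟩
    · rw [← continuousWithinAt_Iio_iff_Iic]
      have hcell : Ioo ((k - 1 : ℤ) * δ) (k * δ) ∈ 𝓝[<] ((k : ℝ) * δ) :=
        Ioo_mem_nhdsLT (by push_cast; linarith)
      refine (continuous_interpPiece hf (k - 1)).continuousWithinAt.congr_of_eventuallyEq
        (eventuallyEq_of_mem hcell fun s hs => interp_eq_interpPiece hδ ⟨hs.1.le, ?_⟩) ?_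
      · push_cast at hs ⊢; linarith [hs.2]
      · rw [interp_intCast_mul hδ hf0, interpPiece_sub_one hδ.ne' hf1]
    · have hcell : Ico ((k : ℝ) * δ) (k * δ + δ) ∈ 𝓝[≥] ((k : ℝ) * δ) :=
        Ico_mem_nhdsGE (by linarith)
      exact (continuous_interpPiece hf k).continuousWithinAt.congr_of_eventuallyEq
        (eventuallyEq_of_mem hcell fun s hs => interp_eq_interpPiece hδ hs)
        (interp_eq_interpPiece hδ ⟨le_rfl, by linarith⟩)
  · push Not at hgrid
    exact (continuous_interpPiece hf _).continuousAt.congr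
      (interp_eventuallyEq_interpPiece hδ hgrid).symm

lemma hasDerivAt_interp (hδ : 0 < δ) (hf : Differentiable ℝ f) (ht : ∀ k : ℤ, t ≠ k * δ) :
    HasDerivAt (interp f β δ) (interpDeriv f β δ t) t :=
  (hasDerivAt_interpPiece hf _ t).congr_of_eventuallyEq (interp_eventuallyEq_interpPiece hδ ht)

lemma ae_ne_intCast_mul (δ : ℝ) : ∀ᵐ t ∂(volume : Measure ℝ), ∀ k : ℤ, t ≠ k * δ := by
  rw [ae_iff]
  refine measure_mono_null (fun t ht => ?_) ((countable_range fun k : ℤ => k * δ).measure_zero _)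
  simp only [mem_ofPred_eq, not_forall, not_not] at ht
  obtain ⟨k, hk⟩ := ht
  exact ⟨k, hk.symm⟩

variable {α : Type*} [MeasurableSpace α]

lemma measurable_comp_floor_div {F : ℤ → α × ℝ → ℝ} (hF : ∀ k, Measurable (F k)) (δ : ℝ) :
    Measurable fun p : α × ℝ => F ⌊p.2 / δ⌋ p := by
  have hF' : Measurable fun q : (α × ℝ) × ℤ => F q.2 q.1 :=
    measurable_from_prod_countable_left fun k => hF k
  exact hF'.comp (measurable_id.prodMk (Int.measurable_floor.comp (measurable_snd.div_const δ)))

lemma measurable_interp_param (hf : Continuous f) {b : ℝ → α → ℝ} (hb : ∀ t, Measurable (b t)) :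
    Measurable fun p : α × ℝ => interp f (fun r => b r p.1) δ p.2 := by
  refine measurable_comp_floor_div (F := fun k p => interpPiece f (fun r => b r p.1) δ k p.2)
    (fun k => ?_) δ
  have := hf.measurable
  have := hb (k * δ); have := hb (k * δ + δ)
  unfold interpPiece; fun_prop

lemma measurable_interpDeriv_param {b : ℝ → α → ℝ} (hb : ∀ t, Measurable (b t)) :
    Measurable fun p : α × ℝ => interpDeriv f (fun r => b r p.1) δ p.2 := by
  refine measurable_comp_floor_div
    (F := fun k p => interpPieceDeriv f (fun r => b r p.1) δ k p.2) (fun k => ?_) δ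
  have := measurable_deriv f
  have := hb (k * δ); have := hb (k * δ + δ)
  unfold interpPieceDeriv; fun_prop

end Interpolation

lemma intervalIntegrable_of_eqOn_Ico {δ : ℝ} (hδ : 0 < δ) {g : ℝ → ℝ} {G : ℕ → ℝ → ℝ}
    (hG : ∀ k, Continuous (G k)) (hg : ∀ k : ℕ, EqOn g (G k) (Ico (k * δ) (k * δ + δ)))
    (n : ℕ) : IntervalIntegrable g volume 0 (n * δ) := by
  have hcell : ∀ k : ℕ, IntervalIntegrable g volume (k * δ) ((k + 1 : ℕ) * δ) := fun k => by
    have hk : ((k + 1 : ℕ) : ℝ) * δ = k * δ + δ := by push_cast; ring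
    rw [hk, intervalIntegrable_iff_integrableOn_Ico_of_le (by linarith)]
    exact ((hG k).integrableOn_Icc.mono_set Ico_subset_Icc_self).congr_fun (hg k).symm
      measurableSet_Ico
  simpa using IntervalIntegrable.trans_iterate (a := fun k : ℕ => k * δ) fun k _ => hcell k

lemma Measurable.intervalIntegral_param {α : Type*} [MeasurableSpace α] {F : α → ℝ → ℝ}
    (hF : Measurable (Function.uncurry F)) (a b : ℝ) :
    Measurable fun x => ∫ s in a..b, F x s := by
  simp only [intervalIntegral]
  exact (hF.stronglyMeasurable.integral_prod_right (ν := volume.restrict (Ioc a b))).measurable.sub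
    (hF.stronglyMeasurable.integral_prod_right (ν := volume.restrict (Ioc b a))).measurable

section Approximation

variable {Ω : Type*} {f₁ f₂ : ℝ → ℝ} {B : ℝ → Ω → ℝ × ℝ} {δ : ℝ}

lemma Bdelta_eq_interp (t : ℝ) (ω : Ω) :
    Bdelta f₁ f₂ B δ t ω =
      (interp f₁ (fun r => (B r ω).1) δ t, interp f₂ (fun r => (B r ω).2) δ t) := rfl

lemma measurable_Bdelta [MeasurableSpace Ω] (hB : ∀ t, Measurable (B t)) (t : ℝ) :
    Measurable (Bdelta f₁ f₂ B δ t) := by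
  have := hB (⌊t / δ⌋ * δ); have := hB (⌊t / δ⌋ * δ + δ)
  unfold Bdelta; fun_prop

def BdeltaDeriv (f₁ f₂ : ℝ → ℝ) (B : ℝ → Ω → ℝ × ℝ) (δ s : ℝ) (ω : Ω) : ℝ × ℝ :=
  (interpDeriv f₁ (fun r => (B r ω).1) δ s, interpDeriv f₂ (fun r => (B r ω).2) δ s)

lemma continuous_Bdelta (hδ : 0 < δ) (hf₁ : InterpFun f₁) (hf₂ : InterpFun f₂) (ω : Ω) :
    Continuous fun t => Bdelta f₁ f₂ B δ t ω :=
  (continuous_interp (β := fun r => (B r ω).1) hδ hf₁.1.continuous hf₁.2.1 hf₁.2.2).prodMk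
    (continuous_interp (β := fun r => (B r ω).2) hδ hf₂.1.continuous hf₂.2.1 hf₂.2.2)

lemma Bdelta_zero (hδ : 0 < δ) (hf₁ : f₁ 0 = 0) (hf₂ : f₂ 0 = 0) {ω : Ω} (hB : B 0 ω = 0) :
    Bdelta f₁ f₂ B δ 0 ω = 0 := by
  simp [Bdelta_eq_interp, interp_of_mem_Ico_zero hδ ⟨le_rfl, hδ⟩, hf₁, hf₂, hB]

lemma fst_Bdelta_of_mem_Ico (hδ : 0 < δ) (hf₁ : f₁ 0 = 0) {ω : Ω} (hB : B 0 ω = 0) {t : ℝ}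
    (ht : t ∈ Ico 0 δ) :
    (Bdelta f₁ f₂ B δ t ω).1 = f₁ (t / δ) * (Bdelta f₁ f₂ B δ δ ω).1 := by
  have hδδ := interp_intCast_mul (β := fun r => (B r ω).1) hδ hf₁ 1
  simp only [Int.cast_one, one_mul] at hδδ
  simp [Bdelta_eq_interp, interp_of_mem_Ico_zero hδ ht, hδδ, hB]

lemma hasDerivAt_Bdelta (hδ : 0 < δ) (hf₁ : Differentiable ℝ f₁) (hf₂ : Differentiable ℝ f₂)
    {s : ℝ} (hs : ∀ k : ℤ, s ≠ k * δ) (ω : Ω) :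
    HasDerivAt (fun t => Bdelta f₁ f₂ B δ t ω) (BdeltaDeriv f₁ f₂ B δ s ω) s :=
  (hasDerivAt_interp (β := fun r => (B r ω).1) hδ hf₁ hs).prodMk
    (hasDerivAt_interp (β := fun r => (B r ω).2) hδ hf₂ hs)

lemma Adelta_eq_integral (hδ : 0 < δ) (hf₁ : Differentiable ℝ f₁) (hf₂ : Differentiable ℝ f₂)
    (t : ℝ) (ω : Ω) :
    Adelta f₁ f₂ B δ t ω =
      1 / 2 * ∫ s in 0..t, symp (Bdelta f₁ f₂ B δ s ω) (BdeltaDeriv f₁ f₂ B δ s ω) := by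
  rw [Adelta]
  congr 1
  refine intervalIntegral.integral_congr_ae ?_
  filter_upwards [ae_ne_intCast_mul δ] with s hs _
  rw [(hasDerivAt_Bdelta hδ hf₁ hf₂ hs ω).deriv]

lemma continuousOn_Adelta (hδ : 0 < δ) (hf₁ : ContDiff ℝ 1 f₁) (hf₂ : ContDiff ℝ 1 f₂) (ω : Ω) :
    ContinuousOn (fun t => Adelta f₁ f₂ B δ t ω) (Icc 0 1) := by
  simp only [Adelta_eq_integral hδ (hf₁.differentiable one_ne_zero)
    (hf₂.differentiable one_ne_zero)]
  set n := ⌈δ⁻¹⌉₊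
  have hn : 1 ≤ n * δ := by
    rw [← inv_mul_cancel₀ hδ.ne']
    exact mul_le_mul_of_nonneg_right (Nat.le_ceil _) hδ.le
  have hint : IntervalIntegrable
      (fun s => symp (Bdelta f₁ f₂ B δ s ω) (BdeltaDeriv f₁ f₂ B δ s ω)) volume 0 (n * δ) := by
    refine intervalIntegrable_of_eqOn_Ico hδ (G := fun k s => symp
      (interpPiece f₁ (fun r => (B r ω).1) δ k s, interpPiece f₂ (fun r => (B r ω).2) δ k s)
      (interpPieceDeriv f₁ (fun r => (B r ω).1) δ k s,
        interpPieceDeriv f₂ (fun r => (B r ω).2) δ k s)) (fun k => ?_) (fun k s hs => ?_) n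
    · have := continuous_interpPiece (β := fun r => (B r ω).1) (δ := δ) hf₁.continuous k
      have := continuous_interpPiece (β := fun r => (B r ω).2) (δ := δ) hf₂.continuous k
      have := continuous_interpPieceDeriv (β := fun r => (B r ω).1) (δ := δ)
        (hf₁.continuous_deriv le_rfl) k
      have := continuous_interpPieceDeriv (β := fun r => (B r ω).2) (δ := δ)
        (hf₂.continuous_deriv le_rfl) k
      unfold symp; fun_prop
    · have hs' : s ∈ Ico (((k : ℤ) : ℝ) * δ) ((k : ℤ) * δ + δ) := by simpa using hs
      simp only [Bdelta_eq_interp, BdeltaDeriv, interp_eq_interpPiece hδ hs',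
        interpDeriv_eq_interpPieceDeriv hδ hs']
  have hprim := intervalIntegral.continuousOn_primitive_interval' hint left_mem_uIcc
  rw [uIcc_of_le (by positivity)] at hprim
  exact continuousOn_const.mul (hprim.mono (Icc_subset_Icc_right hn))

lemma measurable_Adelta [MeasurableSpace Ω] (hδ : 0 < δ) (hf₁ : Differentiable ℝ f₁)
    (hf₂ : Differentiable ℝ f₂) (hB : ∀ t, Measurable (B t)) (t : ℝ) :
    Measurable (Adelta f₁ f₂ B δ t) := by
  have hB₁ := measurable_interp_param (δ := δ) hf₁.continuous fun t => (hB t).fst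
  have hB₂ := measurable_interp_param (δ := δ) hf₂.continuous fun t => (hB t).snd
  have hD₁ := measurable_interpDeriv_param (f := f₁) (δ := δ) fun t => (hB t).fst
  have hD₂ := measurable_interpDeriv_param (f := f₂) (δ := δ) fun t => (hB t).snd
  have hF : Measurable fun p : Ω × ℝ =>
      symp (Bdelta f₁ f₂ B δ p.2 p.1) (BdeltaDeriv f₁ f₂ B δ p.2 p.1) := by
    simp only [Bdelta_eq_interp, BdeltaDeriv, symp]
    exact (hB₁.mul hD₂).sub (hB₂.mul hD₁)
  simp only [funext (Adelta_eq_integral hδ hf₁ hf₂ t)]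
  exact (hF.intervalIntegral_param 0 t).const_mul _

end Approximation

section Paths

lemma mkPath_toFun {x : ℝ → He} (hx : ContinuousOn x (Icc 0 1)) (h0 : x 0 = hId) :
    (mkPath x).toFun = x := by
  rw [mkPath, dif_pos ⟨hx, h0⟩]

lemma measurable_toFun_apply (t : ℝ) : Measurable fun γ : W0H => γ.toFun t :=
  (measurable_pi_apply t).comp (comap_measurable W0H.toFun)

variable {α : Type*} [MeasurableSpace α]

lemma measurable_of_toFun_apply {g : α → W0H} (h : ∀ t, Measurable fun a => (g a).toFun t) :
    Measurable g :=
  measurable_comap_iff.2 (measurable_pi_lambda _ h)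

variable {Ω : Type*} {B : ℝ → Ω → ℝ × ℝ} {f₁ f₂ : ℝ → ℝ} {δ : ℝ}

lemma gdMap_toFun (hδ : 0 < δ) (hf₁ : InterpFun f₁) (hf₂ : InterpFun f₂) {ω : Ω}
    (hB : B 0 ω = 0) :
    (gdMap f₁ f₂ B δ ω).toFun = fun t => (Bdelta f₁ f₂ B δ t ω, Adelta f₁ f₂ B δ t ω) :=
  mkPath_toFun ((continuous_Bdelta hδ hf₁ hf₂ ω).continuousOn.prodMk
    (continuousOn_Adelta hδ hf₁.1 hf₂.1 ω))
    (by rw [Bdelta_zero hδ hf₁.2.1 hf₂.2.1 hB, Adelta, intervalIntegral.integral_same,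
      mul_zero]; rfl)

variable [MeasurableSpace Ω] {P : Measure Ω} {A : ℝ → Ω → ℝ}

lemma gMap_toFun (hB : IsBM2 P B) (hA : IsLevyArea P B A) (ω : Ω) :
    (gMap B A ω).toFun = fun t => (B t ω, A t ω) :=
  mkPath_toFun ((hB.cont ω).prodMk (hA.cont ω)) (by rw [hB.init, hA.init]; rfl)

lemma measurable_gMap (hB : IsBM2 P B) (hA : IsLevyArea P B A) : Measurable (gMap B A) :=
  measurable_of_toFun_apply fun t => by
    simpa only [gMap_toFun hB hA] using (hB.meas t).prodMk (hA.meas t)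

lemma measurable_gdMap (hδ : 0 < δ) (hf₁ : InterpFun f₁) (hf₂ : InterpFun f₂)
    (hB : ∀ t, Measurable (B t)) (hB0 : ∀ ω, B 0 ω = 0) : Measurable (gdMap f₁ f₂ B δ) :=
  measurable_of_toFun_apply fun t => by
    simpa only [gdMap_toFun hδ hf₁ hf₂ (hB0 _)] using (measurable_Bdelta hB t).prodMk
      (measurable_Adelta hδ (hf₁.1.differentiable one_ne_zero)
        (hf₂.1.differentiable one_ne_zero) hB t)

end Paths

/-- (Proposition `p.singular`): for each fixed `δ > 0`, the Wiener measure `μ` (the law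
of the hypoelliptic Brownian motion `g`) and the law `μ_δ` of the approximation `g_δ`
are mutually singular probability measures on `W₀(ℍ)`. -/
theorem mu_and_mu_delta_singular {Ω : Type*} [MeasurableSpace Ω] (P : Measure Ω)
    [IsProbabilityMeasure P] (B : ℝ → Ω → ℝ × ℝ) (A : ℝ → Ω → ℝ)
    (hB : IsBM2 P B) (hA : IsLevyArea P B A)
    (f₁ f₂ : ℝ → ℝ) (hf₁ : InterpFun f₁) (hf₂ : InterpFun f₂)
    (δ : ℝ) (hδ : 0 < δ) :
    IsProbabilityMeasure (P.map (gMap B A)) ∧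
    IsProbabilityMeasure (P.map (gdMap f₁ f₂ B δ)) ∧
    (P.map (gMap B A)).MutuallySingular (P.map (gdMap f₁ f₂ B δ)) := by
  have hg := measurable_gMap hB hA
  have hgd := measurable_gdMap hδ hf₁ hf₂ hB.meas hB.init
  refine ⟨Measure.isProbabilityMeasure_map hg.aemeasurable,
    Measure.isProbabilityMeasure_map hgd.aemeasurable, ?_⟩
  let S : Set W0H := {γ | (γ.toFun (δ / 2)).1.1 = f₁ (δ / 2 / δ) * (γ.toFun δ).1.1}
  have hS : MeasurableSet S :=
    measurableSet_eq_fun (measurable_toFun_apply _).fst.fst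
      (((measurable_toFun_apply _).fst.fst).const_mul _)
  refine ⟨S, hS, ?_, ?_⟩
  · rw [Measure.map_apply hg hS]
    simpa [S, gMap_toFun hB hA] using
      hB.measure_fst_eq_mul_fst (half_pos hδ) (half_lt_self hδ) (f₁ (δ / 2 / δ))
  · rw [Measure.map_apply hgd hS.compl, preimage_compl, compl_empty_iff.2, measure_empty]
    ext ω
    simp only [mem_preimage, mem_univ, iff_true, S, mem_ofPred_eq,
      gdMap_toFun hδ hf₁ hf₂ (hB.init ω)]
    exact fst_Bdelta_of_mem_Ico hδ hf₁.2.1 (hB.init ω) ⟨(half_pos hδ).le, half_lt_self hδ⟩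
end
end

section
/- The set H(ℍ) of finite-energy horizontal curves is dense in W₀(ℍ): the closure of H(ℍ) in the ‖·‖_{W₀(ℍ)}-topology equals W₀(ℍ). -/
open MeasureTheory ProbabilityTheory Filter Topology Set
open scoped Classical

noncomputable section

/-!
Approximate the target path uniformly by a polynomial curve `(a, q)` starting at `e`. The
horizontal lift of `a` has the wrong height in general, so superimpose on `a` a small circular
motion of radius `r` swept through an angle `θ` with `r²θ' = 2q' - ω(a, a')`: the area it encloses
supplies the missing height, and after an integration by parts the remaining cross terms are
`O(r)`. The lift of the perturbed curve is then Euclidean-close to `(a, q)`, hence to the target,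
and on a compact subset of `ℍ` Euclidean closeness forces closeness for `|g⁻¹h|`.
-/

open Polynomial in
theorem exists_polynomial_near_of_continuousOn_of_eq_zero {a b : ℝ} {f : ℝ → ℝ}
    (hf : ContinuousOn f (Icc a b)) (hab : a ≤ b) (hfa : f a = 0) {δ : ℝ} (hδ : 0 < δ) :
    ∃ p : ℝ[X], p.eval a = 0 ∧ ∀ t ∈ Icc a b, |p.eval t - f t| < δ := by
  obtain ⟨p, hp⟩ := exists_polynomial_near_of_continuousOn a b f hf (δ / 2) (half_pos hδ)
  have hpa : |p.eval a| < δ / 2 := by simpa [hfa] using hp a (left_mem_Icc.2 hab)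
  refine ⟨p - C (p.eval a), by simp, fun t ht => ?_⟩
  calc |(p - C (p.eval a)).eval t - f t| = |(p.eval t - f t) - p.eval a| := by
        rw [eval_sub, eval_C, sub_right_comm]
    _ ≤ |p.eval t - f t| + |p.eval a| := abs_sub _ _
    _ < δ / 2 + δ / 2 := add_lt_add (hp t ht) hpa
    _ = δ := add_halves δ

theorem Polynomial.contDiff_eval (p : Polynomial ℝ) (n : WithTop ℕ∞) : ContDiff ℝ n p.eval := by
  simpa using p.contDiff_aeval (𝕜 := ℝ) n

theorem W0H.exists_contDiff_near (x : W0H) {η : ℝ} (hη : 0 < η) :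
    ∃ (a : ℝ → ℝ × ℝ) (q : ℝ → ℝ), ContDiff ℝ 1 a ∧ ContDiff ℝ 1 q ∧ a 0 = 0 ∧ q 0 = 0 ∧
      ∀ t ∈ Icc (0 : ℝ) 1, dist ((a t, q t) : He) (x.toFun t) < η := by
  have h0 : x.toFun 0 = ((0, 0), 0) := x.init
  obtain ⟨p₁, hp₁0, hp₁⟩ := exists_polynomial_near_of_continuousOn_of_eq_zero
    x.cont.fst.fst zero_le_one (by rw [h0]) hη
  obtain ⟨p₂, hp₂0, hp₂⟩ := exists_polynomial_near_of_continuousOn_of_eq_zero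
    x.cont.fst.snd zero_le_one (by rw [h0]) hη
  obtain ⟨p₃, hp₃0, hp₃⟩ := exists_polynomial_near_of_continuousOn_of_eq_zero
    x.cont.snd zero_le_one (by rw [h0]) hη
  refine ⟨fun t => (p₁.eval t, p₂.eval t), p₃.eval,
    (p₁.contDiff_eval 1).prodMk (p₂.contDiff_eval 1), p₃.contDiff_eval 1,
    by simp [hp₁0, hp₂0], hp₃0, fun t ht => ?_⟩
  simp only [Prod.dist_eq, Real.dist_eq, max_lt_iff]
  exact ⟨⟨hp₁ t ht, hp₂ t ht⟩, hp₃ t ht⟩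

theorem continuous_hnorm : Continuous hnorm :=
  (Real.continuous_rpow_const (by norm_num)).comp
    (by fun_prop : Continuous fun g : He => (g.1.1 ^ 2 + g.1.2 ^ 2) ^ 2 + g.2 ^ 2)

theorem hnorm_hmul_hinv_self (g : He) : hnorm (hmul (hinv g) g) = 0 := by
  have h : hmul (hinv g) g = hId := by
    ext <;> simp [hmul, hinv, symp, hId]
    ring
  norm_num [h, hnorm, hId]

theorem continuous_hmul : Continuous fun p : He × He => hmul p.1 p.2 := by
  unfold hmul symp
  fun_prop

theorem continuous_hinv : Continuous hinv := by
  unfold hinv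
  fun_prop

theorem IsCompact.exists_pos_forall_dist_lt_hnorm_lt {K : Set He} (hK : IsCompact K) {ε : ℝ}
    (hε : 0 < ε) :
    ∃ η > 0, ∀ h ∈ K, ∀ g : He, dist g h < η → hnorm (hmul (hinv g) h) < ε := by
  have hU : IsOpen {p : He × He | hnorm (hmul (hinv p.1) p.2) < ε} :=
    isOpen_lt (continuous_hnorm.comp <| continuous_hmul.comp <|
      (continuous_hinv.comp continuous_fst).prodMk continuous_snd) continuous_const
  have hdiag : (fun h => (h, h)) '' K ⊆ {p | hnorm (hmul (hinv p.1) p.2) < ε} := by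
    rintro _ ⟨h, -, rfl⟩
    show hnorm (hmul (hinv h) h) < ε
    rw [hnorm_hmul_hinv_self]
    exact hε
  obtain ⟨η, hη, hsub⟩ :=
    (hK.image (continuous_id.prodMk continuous_id)).exists_thickening_subset_open hU hdiag
  refine ⟨η, hη, fun h hh g hg => ?_⟩
  have hgh : (g, h) ∈ Metric.thickening η ((fun h => (h, h)) '' K) := by
    refine Metric.mem_thickening_iff.2 ⟨(h, h), mem_image_of_mem _ hh, ?_⟩
    rw [Prod.dist_eq, dist_self]
    exact max_lt hg hη
  simpa only [mem_ofPred_eq] using hsub hgh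

theorem dW_le_of_forall_le {x y : W0H} {c : ℝ}
    (h : ∀ t ∈ Icc (0 : ℝ) 1, hnorm (hmul (hinv (x.toFun t)) (y.toFun t)) ≤ c) : dW x y ≤ c :=
  haveI : Nonempty (Icc (0 : ℝ) 1) := ⟨⟨0, left_mem_Icc.2 zero_le_one⟩⟩
  ciSup_le fun t => h t t.2

section ProdDeriv

variable {𝕜 E F : Type*} [NontriviallyNormedField 𝕜] [NormedAddCommGroup E] [NormedSpace 𝕜 E]
  [NormedAddCommGroup F] [NormedSpace 𝕜 F] {f : 𝕜 → E × F} {f' : E × F} {t : 𝕜}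

theorem HasDerivAt.fst (hf : HasDerivAt f f' t) : HasDerivAt (fun s => (f s).1) f'.1 t :=
  (hasFDerivAt_fst (p := f t)).comp_hasDerivAt t hf

theorem HasDerivAt.snd (hf : HasDerivAt f f' t) : HasDerivAt (fun s => (f s).2) f'.2 t :=
  (hasFDerivAt_snd (p := f t)).comp_hasDerivAt t hf

end ProdDeriv

theorem HasDerivAt.symp {f g : ℝ → ℝ × ℝ} {f' g' : ℝ × ℝ} {t : ℝ} (hf : HasDerivAt f f' t)
    (hg : HasDerivAt g g' t) :
    HasDerivAt (fun s => symp (f s) (g s)) (symp f' (g t) + symp (f t) g') t := by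
  refine ((hf.fst.mul hg.snd).sub (hf.snd.mul hg.fst)).congr_deriv ?_
  simp only [_root_.symp]
  ring

theorem Continuous.symp {f g : ℝ → ℝ × ℝ} (hf : Continuous f) (hg : Continuous g) :
    Continuous fun s => symp (f s) (g s) :=
  (hf.fst.mul hg.snd).sub (hf.snd.mul hg.fst)

theorem abs_symp_le (v w : ℝ × ℝ) : |symp v w| ≤ 2 * ‖v‖ * ‖w‖ := by
  have h₁ : |v.1 * w.2| ≤ ‖v‖ * ‖w‖ := by
    rw [abs_mul]
    exact mul_le_mul (norm_fst_le v) (norm_snd_le w) (abs_nonneg _) (norm_nonneg _)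
  have h₂ : |v.2 * w.1| ≤ ‖v‖ * ‖w‖ := by
    rw [abs_mul]
    exact mul_le_mul (norm_snd_le v) (norm_fst_le w) (abs_nonneg _) (norm_nonneg _)
  calc |symp v w| ≤ |v.1 * w.2| + |v.2 * w.1| := abs_sub _ _
    _ ≤ 2 * ‖v‖ * ‖w‖ := by linarith

def liftHeight (x x' : ℝ → ℝ × ℝ) (t : ℝ) : ℝ := 1 / 2 * ∫ s in (0 : ℝ)..t, symp (x s) (x' s)

theorem hasDerivAt_liftHeight {x x' : ℝ → ℝ × ℝ} (hx : Continuous x) (hx' : Continuous x')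
    (t : ℝ) : HasDerivAt (liftHeight x x') (1 / 2 * symp (x t) (x' t)) t :=
  ((hx.symp hx').integral_hasStrictDerivAt 0 t).hasDerivAt.const_mul _

theorem exists_mem_HH_toFun_eq {x x' : ℝ → ℝ × ℝ} (hx : ∀ t, HasDerivAt x (x' t) t)
    (hx' : Continuous x') (hx0 : x 0 = 0) :
    ∃ γ ∈ HH, ∀ t, γ.toFun t = (x t, liftHeight x x' t) := by
  have hxc : Continuous x := continuous_iff_continuousAt.2 fun t => (hx t).continuousAt
  have hzc : Continuous (liftHeight x x') :=
    continuous_iff_continuousAt.2 fun t => (hasDerivAt_liftHeight hxc hx' t).continuousAt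
  let γ : W0H := ⟨fun t => (x t, liftHeight x x' t), (hxc.prodMk hzc).continuousOn,
    by simp [hx0, liftHeight, hId]; rfl⟩
  refine ⟨γ, ⟨x', hx'.integrableOn_Icc, ?_, fun t _ => ?_, fun t _ => rfl⟩, fun t => rfl⟩
  · exact ((hx'.fst.pow 2).add (hx'.snd.pow 2)).integrableOn_Icc
  · rw [intervalIntegral.integral_eq_sub_of_hasDerivAt (fun s _ => hx s)
      (hx'.intervalIntegrable 0 t), hx0, sub_zero]

def loopOffset (θ : ℝ → ℝ) (r t : ℝ) : ℝ × ℝ := (r * (Real.cos (θ t) - 1), r * Real.sin (θ t))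

def loopVelocity (θ θ' : ℝ → ℝ) (r t : ℝ) : ℝ × ℝ :=
  (-(r * θ' t * Real.sin (θ t)), r * θ' t * Real.cos (θ t))

theorem hasDerivAt_loopOffset {θ θ' : ℝ → ℝ} {t : ℝ} (hθ : HasDerivAt θ (θ' t) t) (r : ℝ) :
    HasDerivAt (loopOffset θ r) (loopVelocity θ θ' r t) t := by
  refine ((((Real.hasDerivAt_cos _).comp t hθ).sub_const 1).const_mul r).prodMk
    (((Real.hasDerivAt_sin _).comp t hθ).const_mul r) |>.congr_deriv ?_
  simp only [loopVelocity]
  ext <;> ring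

theorem continuous_loopOffset {θ : ℝ → ℝ} (hθ : Continuous θ) (r : ℝ) :
    Continuous (loopOffset θ r) := by
  unfold loopOffset
  fun_prop

theorem continuous_loopVelocity {θ θ' : ℝ → ℝ} (hθ : Continuous θ) (hθ' : Continuous θ')
    (r : ℝ) : Continuous (loopVelocity θ θ' r) := by
  unfold loopVelocity
  fun_prop

theorem norm_loopOffset_le (θ : ℝ → ℝ) (r t : ℝ) : ‖loopOffset θ r t‖ ≤ 2 * |r| := by
  have hc := abs_le.2 ⟨Real.neg_one_le_cos (θ t), Real.cos_le_one (θ t)⟩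
  refine norm_prod_le_iff.2 ⟨?_, ?_⟩ <;> simp only [loopOffset, Real.norm_eq_abs, abs_mul]
  · calc |r| * |Real.cos (θ t) - 1| ≤ |r| * (|Real.cos (θ t)| + |1|) :=
          mul_le_mul_of_nonneg_left (abs_sub _ _) (abs_nonneg r)
      _ ≤ 2 * |r| := by rw [abs_one]; nlinarith [abs_nonneg r]
  · nlinarith [abs_nonneg r, Real.abs_sin_le_one (θ t)]

theorem loopOffset_of_eq_zero {θ : ℝ → ℝ} {t : ℝ} (hθ : θ t = 0) (r : ℝ) :
    loopOffset θ r t = 0 := by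
  simp [loopOffset, hθ]

theorem hasDerivAt_height_defect {a : ℝ → ℝ × ℝ} {q θ θ' z : ℝ → ℝ} {a' : ℝ × ℝ} {q' r t : ℝ}
    (ha : HasDerivAt a a' t) (hq : HasDerivAt q q' t) (hθ : HasDerivAt θ (θ' t) t)
    (hθq : r ^ 2 * θ' t = 2 * q' - symp (a t) a')
    (hz : HasDerivAt z (1 / 2 * symp (a t + loopOffset θ r t) (a' + loopVelocity θ θ' r t)) t) :
    HasDerivAt
      (fun s => z s - q s + r / 2 * (loopOffset θ r s).2 - 1 / 2 * symp (a s) (loopOffset θ r s))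
      (symp (loopOffset θ r t) a') t := by
  have hw := hasDerivAt_loopOffset hθ r
  refine (((hz.sub hq).add (hw.snd.const_mul (r / 2))).sub
    ((ha.symp hw).const_mul (1 / 2))).congr_deriv ?_
  simp only [symp, loopOffset, loopVelocity, Prod.fst_add, Prod.snd_add] at hθq ⊢
  -- the loop sweeps area `½ω(w, w') = ½r²θ'(1 - cos θ)`; its `½r²θ'` part is `q' - ½ω(a, a')`
  linear_combination (1 / 2) * hθq + (1 / 2 * r ^ 2 * θ' t) * Real.sin_sq_add_cos_sq (θ t)

theorem abs_sub_le_of_hasDerivAt_loopOffset {a a' : ℝ → ℝ × ℝ} {q q' θ θ' z : ℝ → ℝ} {r A A' : ℝ}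
    (ha : ∀ t, HasDerivAt a (a' t) t) (hq : ∀ t, HasDerivAt q (q' t) t)
    (hθ : ∀ t, HasDerivAt θ (θ' t) t) (hθq : ∀ t, r ^ 2 * θ' t = 2 * q' t - symp (a t) (a' t))
    (hz : ∀ t, HasDerivAt z
      (1 / 2 * symp (a t + loopOffset θ r t) (a' t + loopVelocity θ θ' r t)) t)
    (hθ0 : θ 0 = 0) (hzq0 : z 0 = q 0) (hA : ∀ t ∈ Icc (0 : ℝ) 1, ‖a t‖ ≤ A)
    (hA' : ∀ t ∈ Icc (0 : ℝ) 1, ‖a' t‖ ≤ A') {t : ℝ} (ht : t ∈ Icc (0 : ℝ) 1) :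
    |z t - q t| ≤ |r| * (|r| + 2 * A + 4 * A') := by
  set w := loopOffset θ r
  set D := fun s => z s - q s + r / 2 * (w s).2 - 1 / 2 * symp (a s) (w s)
  have hD0 : D 0 = 0 := by simp [D, w, loopOffset_of_eq_zero hθ0, hzq0, symp]
  have hD : |D t| ≤ 4 * |r| * A' * t := by
    have hbound : ∀ s ∈ Ico (0 : ℝ) 1, ‖symp (w s) (a' s)‖ ≤ 4 * |r| * A' := fun s hs =>
      calc ‖symp (w s) (a' s)‖ ≤ 2 * ‖w s‖ * ‖a' s‖ := abs_symp_le _ _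
        _ ≤ 2 * (2 * |r|) * A' := by
          gcongr
          · exact norm_loopOffset_le θ r s
          · exact hA' s (Ico_subset_Icc_self hs)
        _ = 4 * |r| * A' := by ring
    have := norm_image_sub_le_of_norm_deriv_le_segment' (f := D)
      (fun s _ => (hasDerivAt_height_defect (ha s) (hq s) (hθ s) (hθq s) (hz s)).hasDerivWithinAt)
      hbound t ht
    rwa [hD0, sub_zero, sub_zero, Real.norm_eq_abs] at this
  have hA0 : 0 ≤ A := (norm_nonneg _).trans (hA t ht)
  have hA'0 : 0 ≤ A' := (norm_nonneg _).trans (hA' t ht)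
  have hw : ‖w t‖ ≤ 2 * |r| := norm_loopOffset_le θ r t
  have hw₂ : |r / 2 * (w t).2| ≤ |r| * |r| := by
    rw [abs_mul, abs_div, abs_two]
    nlinarith [abs_nonneg r, (norm_snd_le (w t)).trans hw, Real.norm_eq_abs (w t).2]
  have haw : |1 / 2 * symp (a t) (w t)| ≤ |r| * (2 * A) := by
    rw [abs_mul, abs_of_pos one_half_pos]
    nlinarith [abs_symp_le (a t) (w t), hA t ht, norm_nonneg (a t), norm_nonneg (w t)]
  have hDt : |D t| ≤ |r| * (4 * A') :=
    calc |D t| ≤ 4 * |r| * A' * t := hD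
      _ ≤ 4 * |r| * A' * 1 := mul_le_mul_of_nonneg_left ht.2 (by positivity)
      _ = |r| * (4 * A') := by ring
  calc |z t - q t| = |D t - r / 2 * (w t).2 + 1 / 2 * symp (a t) (w t)| := by
        congr 1
        simp only [D]
        ring
    _ ≤ |D t| + |r / 2 * (w t).2| + |1 / 2 * symp (a t) (w t)| :=
        (abs_add_le _ _).trans (add_le_add_left (abs_sub _ _) _)
    _ ≤ |r| * (|r| + 2 * A + 4 * A') := by linarith

def windingAngle (a : ℝ → ℝ × ℝ) (q : ℝ → ℝ) (r t : ℝ) : ℝ :=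
  2 / r ^ 2 * (q t - liftHeight a (deriv a) t)

theorem exists_pos_lt_and_mul_add_lt {ε : ℝ} (hε : 0 < ε) (K : ℝ) :
    ∃ r > 0, 2 * r < ε ∧ r * (r + K) < ε := by
  have h₁ : ∀ᶠ r in 𝓝 (0 : ℝ), 2 * r < ε :=
    (continuous_const.mul continuous_id).tendsto' 0 0 (by simp) |>.eventually_lt_const hε
  have h₂ : ∀ᶠ r in 𝓝 (0 : ℝ), r * (r + K) < ε :=
    (continuous_id.mul (continuous_id.add continuous_const)).tendsto' 0 0 (by simp)
      |>.eventually_lt_const hε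
  obtain ⟨r, hr, hr₁, hr₂⟩ :=
    (eventually_mem_nhdsWithin.and (nhdsWithin_le_nhds (h₁.and h₂))).exists (f := 𝓝[>] (0 : ℝ))
  exact ⟨r, hr, hr₁, hr₂⟩

theorem exists_mem_HH_near {a : ℝ → ℝ × ℝ} {q : ℝ → ℝ} (ha : ContDiff ℝ 1 a)
    (hq : ContDiff ℝ 1 q) (ha0 : a 0 = 0) (hq0 : q 0 = 0) {ε : ℝ} (hε : 0 < ε) :
    ∃ γ ∈ HH, ∀ t ∈ Icc (0 : ℝ) 1, dist (γ.toFun t) (a t, q t) < ε := by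
  have hda t : HasDerivAt a (deriv a t) t := (ha.differentiable one_ne_zero t).hasDerivAt
  have hdq t : HasDerivAt q (deriv q t) t := (hq.differentiable one_ne_zero t).hasDerivAt
  have ha' := ha.continuous_deriv le_rfl
  obtain ⟨A, hA⟩ := isCompact_Icc.exists_bound_of_continuousOn ha.continuous.continuousOn
  obtain ⟨A', hA'⟩ := isCompact_Icc.exists_bound_of_continuousOn ha'.continuousOn
  obtain ⟨r, hr, hrε, hrε'⟩ := exists_pos_lt_and_mul_add_lt hε (2 * A + 4 * A')
  set θ := windingAngle a q r
  set θ' := fun t => 2 / r ^ 2 * (deriv q t - 1 / 2 * symp (a t) (deriv a t))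
  have hθ t : HasDerivAt θ (θ' t) t :=
    ((hdq t).sub (hasDerivAt_liftHeight ha.continuous ha' t)).const_mul _
  have hθc : Continuous θ := continuous_iff_continuousAt.2 fun t => (hθ t).continuousAt
  have hθ'c : Continuous θ' :=
    continuous_const.mul ((hq.continuous_deriv le_rfl).sub
      (continuous_const.mul (ha.continuous.symp ha')))
  have hθq t : r ^ 2 * θ' t = 2 * deriv q t - symp (a t) (deriv a t) := by
    simp only [θ']
    field_simp
  have hθ0 : θ 0 = 0 := by simp [θ, windingAngle, hq0, liftHeight]
  have hx : Continuous fun t => a t + loopOffset θ r t :=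
    ha.continuous.add (continuous_loopOffset hθc r)
  have hx' : Continuous fun t => deriv a t + loopVelocity θ θ' r t :=
    ha'.add (continuous_loopVelocity hθc hθ'c r)
  obtain ⟨γ, hγ, hγt⟩ := exists_mem_HH_toFun_eq (x := fun t => a t + loopOffset θ r t)
    (fun t => (hda t).add (hasDerivAt_loopOffset (hθ t) r)) hx'
    (by simp [ha0, loopOffset_of_eq_zero hθ0])
  refine ⟨γ, hγ, fun t ht => ?_⟩
  rw [hγt, Prod.dist_eq, dist_eq_norm, Real.dist_eq, add_sub_cancel_left]
  refine max_lt ((norm_loopOffset_le θ r t).trans_lt (by rwa [abs_of_pos hr])) ?_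
  calc _ ≤ |r| * (|r| + 2 * A + 4 * A') :=
        abs_sub_le_of_hasDerivAt_loopOffset hda hdq hθ hθq (hasDerivAt_liftHeight hx hx') hθ0
          (by simp [liftHeight, hq0]) hA hA' ht
    _ < ε := by rwa [abs_of_pos hr, add_assoc]

/-- (Proposition `p.closure`): the set `H(ℍ)` of finite-energy horizontal curves is dense
in `W₀(ℍ)`: its closure in the `‖·‖_{W₀(ℍ)}`-topology is all of `W₀(ℍ)`. -/
theorem horizontal_curves_dense : wClosure HH = Set.univ := by
  refine eq_univ_of_forall fun x ε hε => ?_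
  obtain ⟨η, hη, hnear⟩ := (isCompact_Icc.image_of_continuousOn x.cont)
    |>.exists_pos_forall_dist_lt_hnorm_lt (half_pos hε)
  obtain ⟨a, q, ha, hq, ha0, hq0, hax⟩ := x.exists_contDiff_near (half_pos hη)
  obtain ⟨γ, hγ, hγa⟩ := exists_mem_HH_near ha hq ha0 hq0 (half_pos hη)
  refine ⟨γ, hγ, lt_of_le_of_lt (dW_le_of_forall_le fun t ht => ?_) (half_lt_self hε)⟩
  refine (hnear _ (mem_image_of_mem _ ht) _ ?_).le
  calc dist (γ.toFun t) (x.toFun t)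
      ≤ dist (γ.toFun t) (a t, q t) + dist ((a t, q t) : He) (x.toFun t) := dist_triangle _ _ _
    _ < η / 2 + η / 2 := add_lt_add (hγa t ht) (hax t ht)
    _ = η := add_halves η

end
end

section
/- Let ξ(t) = (0,0,t) ∈ ℍ for t ∈ [0,1], and for n ∈ ℕ let φ_n(s) = ((2/n)cos(n²s), (1/n)sin(n²s), s). Then each φ_n is a horizontal curve of finite energy (i.e., its third component satisfies φ_{n,3}′(s) = (1/2)ω(𝛗_n(s),𝛗_n′(s)) with ∫₀¹‖𝛗_n′(s)‖²ds < ∞), and max_{0≤t≤1}|φ_n(t)⁻¹ξ(t)| → 0 as n → ∞. -/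
open MeasureTheory Filter Topology Set

noncomputable section

/-- The vertical curve `ξ(t) = (0,0,t)`. -/
def xi (t : ℝ) : He := ((0, 0), t)

/-- The helices `φ_n(s) = ((2/n)cos(n²s), (1/n)sin(n²s), s)`. -/
def helix (n : ℕ) (s : ℝ) : He :=
  ((2 / (n : ℝ) * Real.cos ((n : ℝ) ^ 2 * s), 1 / (n : ℝ) * Real.sin ((n : ℝ) ^ 2 * s)), s)

/-! The planar projection of `φ_n` moves along an ellipse with semi-axes `2/n` and `1/n`, so
`φ_n(t)⁻¹ ξ(t)` lies in the horizontal plane at distance at most `2/n` from the origin. The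
horizontal lift of that ellipse climbs at unit speed, because the swept area rate
`(1/2)ω(𝛗_n, 𝛗_n')` equals `(1/2)·(2/n)·(1/n)·n² = 1`, so the lift is exactly `φ_n`. -/

lemma hnorm_nonneg (g : He) : 0 ≤ hnorm g := by
  unfold hnorm
  positivity

lemma hnorm_le_of_snd_eq_zero {g : He} {r : ℝ} (hg : g.2 = 0) (hr : 0 ≤ r)
    (hv : g.1.1 ^ 2 + g.1.2 ^ 2 ≤ r ^ 2) : hnorm g ≤ r := by
  have hv' : (g.1.1 ^ 2 + g.1.2 ^ 2) ^ 2 + g.2 ^ 2 ≤ r ^ 4 := by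
    rw [hg, show r ^ 4 = (r ^ 2) ^ 2 by ring]
    nlinarith [sq_nonneg g.1.1, sq_nonneg g.1.2]
  calc hnorm g ≤ (r ^ 4) ^ ((1 : ℝ) / 4) :=
        Real.rpow_le_rpow (by positivity) hv' (by norm_num)
    _ = r := by
        rw [← Real.rpow_natCast r 4, ← Real.rpow_mul hr]
        norm_num

lemma helix_fst_hasDerivAt (n : ℕ) (s : ℝ) :
    HasDerivAt (fun u => (helix n u).1)
      (-(2 * n * Real.sin ((n : ℝ) ^ 2 * s)), n * Real.cos ((n : ℝ) ^ 2 * s)) s := by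
  have hphase : HasDerivAt (fun u : ℝ => (n : ℝ) ^ 2 * u) ((n : ℝ) ^ 2) s := by
    simpa using (hasDerivAt_id s).const_mul ((n : ℝ) ^ 2)
  have hx := ((Real.hasDerivAt_cos _).comp s hphase).const_mul (2 / (n : ℝ))
  have hy := ((Real.hasDerivAt_sin _).comp s hphase).const_mul (1 / (n : ℝ))
  have hcancel : (n : ℝ) * n * (n : ℝ)⁻¹ = n := mul_self_mul_inv _
  refine (hx.prodMk hy).congr_deriv (Prod.ext ?_ ?_)
  · linear_combination (-2 * Real.sin ((n : ℝ) ^ 2 * s)) * hcancel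
  · linear_combination Real.cos ((n : ℝ) ^ 2 * s) * hcancel

lemma symp_helix_fst_deriv {n : ℕ} (hn : n ≠ 0) (s : ℝ) :
    symp (helix n s).1
      (-(2 * n * Real.sin ((n : ℝ) ^ 2 * s)), n * Real.cos ((n : ℝ) ^ 2 * s)) = 2 := by
  have hn' : (n : ℝ) ≠ 0 := Nat.cast_ne_zero.mpr hn
  have hpy := Real.sin_sq_add_cos_sq ((n : ℝ) ^ 2 * s)
  simp only [symp, helix]
  field_simp
  linear_combination hpy

lemma continuous_deriv_helix_fst (n : ℕ) : Continuous (deriv fun u => (helix n u).1) := by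
  rw [funext fun s => (helix_fst_hasDerivAt n s).deriv]
  fun_prop

lemma hmul_hinv_helix_xi (n : ℕ) (t : ℝ) :
    hmul (hinv (helix n t)) (xi t) = (-(helix n t).1, 0) := by
  simp [hmul, hinv, helix, xi, symp]

lemma hnorm_hmul_hinv_helix_xi_le (n : ℕ) (t : ℝ) :
    hnorm (hmul (hinv (helix n t)) (xi t)) ≤ 2 / n := by
  rw [hmul_hinv_helix_xi]
  refine hnorm_le_of_snd_eq_zero rfl (by positivity) ?_
  have hpy := Real.sin_sq_add_cos_sq ((n : ℝ) ^ 2 * t)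
  simp only [helix, Prod.fst_neg, Prod.snd_neg, neg_sq]
  calc (2 / (n : ℝ) * Real.cos ((n : ℝ) ^ 2 * t)) ^ 2 + (1 / n * Real.sin ((n : ℝ) ^ 2 * t)) ^ 2
      = (1 / (n : ℝ)) ^ 2 * (4 - 3 * Real.sin ((n : ℝ) ^ 2 * t) ^ 2) := by
        linear_combination 4 * (1 / (n : ℝ)) ^ 2 * hpy
    _ ≤ (1 / (n : ℝ)) ^ 2 * 4 := by
        gcongr
        exact sub_le_self _ (by positivity)
    _ = (2 / n) ^ 2 := by ring

/-- Each helix `φ_n` (for `n ≥ 1`) is a horizontal curve of finite energy (the derivative of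
its third component equals `(1/2)ω(𝛗_n, 𝛗_n')` everywhere and `∫₀¹‖𝛗_n'‖² < ∞`), and
`max_{0≤t≤1} |φ_n(t)⁻¹ ξ(t)| → 0` as `n → ∞`. -/
theorem helices_shrink_to_vertical_line :
    (∀ n : ℕ, 1 ≤ n → ∀ s : ℝ, ∃ d : ℝ × ℝ,
      HasDerivAt (fun u => (helix n u).1) d s ∧
      HasDerivAt (fun u => (helix n u).2) ((1 / 2) * symp (helix n s).1 d) s) ∧
    (∀ n : ℕ, 1 ≤ n →
      IntegrableOn
        (fun s => (deriv (fun u => (helix n u).1) s).1 ^ 2 +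
                  (deriv (fun u => (helix n u).1) s).2 ^ 2)
        (Icc (0 : ℝ) 1)) ∧
    Tendsto (fun n : ℕ => ⨆ t : Icc (0 : ℝ) 1, hnorm (hmul (hinv (helix n t)) (xi t)))
      atTop (𝓝 0) := by
  refine ⟨fun n hn s => ⟨_, helix_fst_hasDerivAt n s, ?_⟩, fun n _ => ?_, ?_⟩
  · rw [symp_helix_fst_deriv (by omega), one_div_mul_cancel two_ne_zero]
    exact hasDerivAt_id' s
  · have hcont := continuous_deriv_helix_fst n
    exact Continuous.integrableOn_Icc (by fun_prop)
  · refine squeeze_zero (fun n => Real.iSup_nonneg fun t => hnorm_nonneg _)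
      (fun n => Real.iSup_le (fun t => hnorm_hmul_hinv_helix_xi_le n t) (by positivity)) ?_
    simpa using tendsto_const_nhds.div_atTop (tendsto_natCast_atTop_atTop (R := ℝ))

end
end
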